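/- arXiv:2201.07296 — 3 statements merged into one kernel-verified Lean document; each statement's English description precedes it below -/
import Mathlib

section
/- Equivalent finiteness conditions for relative entropy: let U : ℝ^d → ℝ_+ be measurable with ∫_{ℝ^d} e^{−U(θ)} dθ = 1 and suppose there are constants C > 0 and p ∈ ℕ with |U(θ)| ≤ C(1+|θ|^p) for all θ. Write γ(dθ) = e^{−U(θ)}dθ. Then for every ν ∈ P_p(ℝ^d) absolutely continuous with respect to Lebesgue measure, the following are equivalent: (i) ∫ ln(dν/dγ) dν < ∞; (ii) ∫ |ln(dν/dγ)| dν < ∞; (iii) ∫ ln(dν/dθ) dν < ∞; (iv) ∫ |ln(dν/dθ)| dν < ∞. -/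
open MeasureTheory ProbabilityTheory Filter Set
open scoped ENNReal NNReal Topology RealInnerProductSpace

noncomputable section

namespace PolicyGradientMF

variable {S A : Type*} [MeasurableSpace S] [MeasurableSpace A]

/-- `n`-step state distribution starting from `s`, following the stochastic policy `π`
in the MDP with transition kernel `P`; this is `P_π^n(·|s)`. -/
def stateIter (P : S → A → Measure S) (π : S → Measure A) : ℕ → S → Measure S
  | 0, s => Measure.dirac s
  | n + 1, s => (stateIter P π n s).bind fun s' => (π s').bind fun a => P s' a

/-- The log-density `ln (dπ(·|s)/dμA)(a)` of a policy with respect to the reference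
measure `μA`. -/
def logDen (μA : Measure A) (π : S → Measure A) (s : S) (a : A) : ℝ :=
  Real.log ((Measure.rnDeriv (π s) μA a).toReal)

/-- The `τ`-entropy regularized value function
`V^π_τ(s) = ∑ γ^n E[ r(s_n,a_n) − τ ln (dπ/dμ)(a_n|s_n) ]`. -/
def value (P : S → A → Measure S) (μA : Measure A) (r : S → A → ℝ) (γ τ : ℝ)
    (π : S → Measure A) (s : S) : ℝ :=
  ∑' n : ℕ, γ ^ n * ∫ s', (∫ a, (r s' a - τ * logDen μA π s' a) ∂(π s')) ∂(stateIter P π n s)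

/-- The `τ`-entropy regularized state-action value function `Q^π_τ`. -/
def qValue (P : S → A → Measure S) (μA : Measure A) (r : S → A → ℝ) (γ τ : ℝ)
    (π : S → Measure A) (s : S) (a : A) : ℝ :=
  r s a + γ * ∫ s', value P μA r γ τ π s' ∂(P s a)

/-- The occupancy kernel `d^π(·|s) = (1-γ) ∑ γ^n P_π^n(·|s)`. -/
def occupancy (P : S → A → Measure S) (γ : ℝ) (π : S → Measure A) (s : S) : Measure S :=
  Measure.sum fun n : ℕ => (ENNReal.ofReal ((1 - γ) * γ ^ n)) • stateIter P π n s

/-- The class `Π_τ` of policies of the form `π(da|s) = exp (F(s,a)) μA(da)` with `F`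
bounded and measurable, each `π(·|s)` being a probability measure. -/
def PiTau (μA : Measure A) : Set (S → Measure A) :=
  {π | (∀ s, IsProbabilityMeasure (π s)) ∧
    ∃ F : S → A → ℝ, Measurable (Function.uncurry F) ∧ (∃ M, ∀ s a, |F s a| ≤ M) ∧
      ∀ s, π s = μA.withDensity fun a => ENNReal.ofReal (Real.exp (F s a))}

/-- Total variation norm `|μ − ν|_{M(α)}` of the difference of two (finite) measures. -/
def tvDist {α : Type*} [MeasurableSpace α] (μ ν : Measure α) : ℝ :=
  (⨆ E : {E : Set α // MeasurableSet E}, ((μ E.1).toReal - (ν E.1).toReal)) +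
    ⨆ E : {E : Set α // MeasurableSet E}, ((ν E.1).toReal - (μ E.1).toReal)

/-- Couplings of two measures. -/
def couplings {α : Type*} [MeasurableSpace α] (μ ν : Measure α) : Set (Measure (α × α)) :=
  {π | π.map Prod.fst = μ ∧ π.map Prod.snd = ν}

/-- The `p`-Wasserstein distance. -/
def wasserstein {α : Type*} [MeasurableSpace α] [PseudoEMetricSpace α] (p : ℝ)
    (μ ν : Measure α) : ℝ :=
  ((⨅ π : couplings μ ν, ∫⁻ q, edist q.1 q.2 ^ p ∂(π.1 : Measure (α × α))) ^ (1 / p)).toReal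

/-- Parameter space `ℝ^d`. -/
abbrev Θ (d : ℕ) : Type := EuclideanSpace ℝ (Fin d)

variable {d : ℕ}

/-- The mean-field softmax policy `π_ν(da|s) ∝ exp (∫ f(θ,s,a) ν(dθ)) μA(da)`. -/
def softmaxPolicy (f : Θ d → S → A → ℝ) (μA : Measure A) (ν : Measure (Θ d)) (s : S) :
    Measure A :=
  μA.withDensity fun a => ENNReal.ofReal
    (Real.exp (∫ θ, f θ s a ∂ν) / ∫ a', Real.exp (∫ θ, f θ s a' ∂ν) ∂μA)

/-- The density of the mean-field softmax policy with respect to `μA`. -/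
def softmaxDen (f : Θ d → S → A → ℝ) (μA : Measure A) (ν : Measure (Θ d)) (s : S) (a : A) :
    ℝ :=
  Real.exp (∫ θ, f θ s a ∂ν) / ∫ a', Real.exp (∫ θ, f θ s a' ∂ν) ∂μA

/-- The centred feature `f(θ,s,a) − ∫ f(θ,s,a') π_ν(da'|s)`; the linear functional derivative
of the softmax policy is `centeredFeature · π_ν(da|s)`. -/
def centeredFeature (f : Θ d → S → A → ℝ) (μA : Measure A) (ν : Measure (Θ d))
    (θ : Θ d) (s : S) (a : A) : ℝ :=
  f θ s a - ∫ a', f θ s a' ∂(softmaxPolicy f μA ν s)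

/-- The convex combination `ν + ε (ν' − ν) = (1-ε) ν + ε ν'`. -/
def mix {α : Type*} [MeasurableSpace α] (ε : ℝ) (ν ν' : Measure α) : Measure α :=
  ENNReal.ofReal (1 - ε) • ν + ENNReal.ofReal ε • ν'

/-- The objective `J^{τ,0}(ν) = V^{π_ν}_τ(ρ)`. -/
def J0 (P : S → A → Measure S) (μA : Measure A) (r : S → A → ℝ) (γ τ : ℝ) (ρ : Measure S)
    (f : Θ d → S → A → ℝ) (ν : Measure (Θ d)) : ℝ :=
  ∫ s, value P μA r γ τ (softmaxPolicy f μA ν) s ∂ρ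

/-- The linear functional derivative `δJ^{τ,0}/δν (ν,θ)` (the explicit policy-gradient
formula). -/
def Jflat (P : S → A → Measure S) (μA : Measure A) (r : S → A → ℝ) (γ τ : ℝ) (ρ : Measure S)
    (f : Θ d → S → A → ℝ) (ν : Measure (Θ d)) (θ : Θ d) : ℝ :=
  (1 - γ)⁻¹ * ∫ s, (∫ a,
      (qValue P μA r γ τ (softmaxPolicy f μA ν) s a
        - τ * logDen μA (softmaxPolicy f μA ν) s a) * centeredFeature f μA ν θ s a
      ∂(softmaxPolicy f μA ν s)) ∂(ρ.bind (occupancy P γ (softmaxPolicy f μA ν)))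

/-- Relative entropy (KL divergence) `KL(ν|m) = ∫ ln (dν/dm) dν`. -/
def klDiv {α : Type*} [MeasurableSpace α] (ν m : Measure α) : ℝ :=
  ∫ x, Real.log ((Measure.rnDeriv ν m x).toReal) ∂ν

/-- The Gibbs measure `e^{-U(θ)} dθ`. -/
def gibbs (U : Θ d → ℝ) : Measure (Θ d) :=
  volume.withDensity fun θ => ENNReal.ofReal (Real.exp (-U θ))

/-- The regularized objective `J^{τ,σ}(ν) = V^{π_ν}_τ(ρ) − (σ²/2) KL(ν|e^{-U})`. -/
def Jreg (P : S → A → Measure S) (μA : Measure A) (r : S → A → ℝ) (γ τ σ : ℝ) (ρ : Measure S)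
    (U : Θ d → ℝ) (f : Θ d → S → A → ℝ) (ν : Measure (Θ d)) : ℝ :=
  J0 P μA r γ τ ρ f ν - σ ^ 2 / 2 * klDiv ν (gibbs U)

/-- The Laplacian on `ℝ^d`. -/
def lapl (φ : Θ d → ℝ) (θ : Θ d) : ℝ :=
  ∑ i, iteratedFDeriv ℝ 2 φ θ ![EuclideanSpace.single i 1, EuclideanSpace.single i 1]

/-- The drift `b(ν,θ) = ∇_θ (δJ^{τ,0}/δν)(ν,θ) − (σ²/2) ∇U(θ)`. -/
def drift (P : S → A → Measure S) (μA : Measure A) (r : S → A → ℝ) (γ τ σ : ℝ) (ρ : Measure S)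
    (U : Θ d → ℝ) (f : Θ d → S → A → ℝ) (ν : Measure (Θ d)) (θ : Θ d) : Θ d :=
  gradient (fun θ' => Jflat P μA r γ τ ρ f ν θ') θ - (σ ^ 2 / 2) • gradient U θ

/-- The generator `L_ν φ = (σ²/2) Δφ + b(ν,·)·∇φ`. -/
def gen (P : S → A → Measure S) (μA : Measure A) (r : S → A → ℝ) (γ τ σ : ℝ) (ρ : Measure S)
    (U : Θ d → ℝ) (f : Θ d → S → A → ℝ) (ν : Measure (Θ d)) (φ : Θ d → ℝ) (θ : Θ d) : ℝ :=
  σ ^ 2 / 2 * lapl φ θ + ⟪drift P μA r γ τ σ ρ U f ν θ, gradient φ θ⟫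

/-- A measure-valued (weak, `C_c^∞`-tested) solution of `∂_t ν_t = L*_{ν_t} ν_t`,
`ν|_{t=0} = ν₀`. -/
def IsGradFlow (P : S → A → Measure S) (μA : Measure A) (r : S → A → ℝ) (γ τ σ : ℝ)
    (ρ : Measure S) (U : Θ d → ℝ) (f : Θ d → S → A → ℝ)
    (ν0 : Measure (Θ d)) (ν : ℝ → Measure (Θ d)) : Prop :=
  ν 0 = ν0 ∧ (∀ t, 0 ≤ t → IsProbabilityMeasure (ν t)) ∧
    ∀ φ : Θ d → ℝ, ContDiff ℝ (⊤ : ℕ∞) φ → HasCompactSupport φ → ∀ t, 0 ≤ t →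
      ∫ θ, φ θ ∂(ν t) = (∫ θ, φ θ ∂ν0) +
        ∫ s in (0:ℝ)..t, ∫ θ, gen P μA r γ τ σ ρ U f (ν s) φ θ ∂(ν s)

/-- A stationary (measure-valued) solution `L*_ν ν = 0`. -/
def IsStationary (P : S → A → Measure S) (μA : Measure A) (r : S → A → ℝ) (γ τ σ : ℝ)
    (ρ : Measure S) (U : Θ d → ℝ) (f : Θ d → S → A → ℝ) (ν : Measure (Θ d)) : Prop :=
  ∀ φ : Θ d → ℝ, ContDiff ℝ (⊤ : ℕ∞) φ → HasCompactSupport φ →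
    ∫ θ, gen P μA r γ τ σ ρ U f ν φ θ ∂ν = 0

/-- Pointwise bound: `|x · min (log x) 0| ≤ 1` for `x ≥ 0`. -/
lemma aux_xlog_bound {x : ℝ} (hx : 0 ≤ x) : |x * min (Real.log x) 0| ≤ 1 := by
  rcases hx.eq_or_lt with h | h
  · simp [← h]
  rcases le_total 1 x with h1 | h1
  · have : min (Real.log x) 0 = 0 := min_eq_right (Real.log_nonneg h1)
    simp [this]
  · have hmin : min (Real.log x) 0 = Real.log x :=
      min_eq_left (Real.log_nonpos hx h1)
    rw [hmin, abs_of_nonpos (mul_nonpos_of_nonneg_of_nonpos hx (Real.log_nonpos hx h1))]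
    have hlog : Real.log x⁻¹ ≤ x⁻¹ - 1 := Real.log_le_sub_one_of_pos (by positivity)
    rw [Real.log_inv] at hlog
    have hxne : x ≠ 0 := h.ne'
    nlinarith [mul_le_mul_of_nonneg_left hlog hx, mul_inv_cancel₀ hxne]

/-- Pointwise bound for negative parts: `|min (a - b) 0| ≤ |min a 0| + |b|`. -/
lemma aux_minpart_bound (a b : ℝ) : |min (a - b) 0| ≤ |min a 0| + |b| := by
  rcases le_total (a - b) 0 with h | h
  · rw [min_eq_left h, abs_of_nonpos h]
    have h1 : min a 0 ≤ a := min_le_left a 0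
    have h2 : -|min a 0| ≤ min a 0 := neg_abs_le _
    have h3 : b ≤ |b| := le_abs_self b
    linarith
  · rw [min_eq_right (by linarith : (0:ℝ) ≤ a - b)]
    simp only [abs_zero]
    positivity

/-- **Equivalent finiteness conditions for relative entropy** (Lemma on relative entropy):
for `ν ∈ P_p(ℝ^d)` absolutely continuous with respect to Lebesgue measure, finiteness of
`∫ ln (dν/dγ) dν`, `∫ |ln (dν/dγ)| dν`, `∫ ln (dν/dθ) dν` and `∫ |ln (dν/dθ)| dν` are all
equivalent, where `γ(dθ) = e^{-U(θ)} dθ`.  Finiteness of `∫ g dν < ∞` for the possibly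
non-absolutely-integrable logarithms is expressed as integrability of the positive part
`max g 0`, while `∫ |g| dν < ∞` is expressed as `Integrable g ν`. -/
theorem relative_entropy_finiteness_equiv {d : ℕ}
    (U : Θ d → ℝ) (hUmeas : Measurable U) (hU0 : ∀ θ, 0 ≤ U θ)
    (hUnorm : ∫ θ : Θ d, Real.exp (-U θ) = 1)
    (C : ℝ) (hC : 0 < C) (p : ℕ)
    (hUgrowth : ∀ θ : Θ d, |U θ| ≤ C * (1 + ‖θ‖ ^ p))
    (ν : Measure (Θ d)) [IsProbabilityMeasure ν]
    (hac : ν ≪ (volume : Measure (Θ d)))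
    (hmom : Integrable (fun θ : Θ d => ‖θ‖ ^ p) ν) :
    (Integrable (fun θ => max (Real.log ((Measure.rnDeriv ν (gibbs U) θ).toReal)) 0) ν ↔
      Integrable (fun θ => Real.log ((Measure.rnDeriv ν (gibbs U) θ).toReal)) ν) ∧
    (Integrable (fun θ => Real.log ((Measure.rnDeriv ν (gibbs U) θ).toReal)) ν ↔
      Integrable
        (fun θ => max (Real.log ((Measure.rnDeriv ν (volume : Measure (Θ d)) θ).toReal)) 0)
        ν) ∧
    (Integrable
        (fun θ => max (Real.log ((Measure.rnDeriv ν (volume : Measure (Θ d)) θ).toReal)) 0)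
        ν ↔
      Integrable (fun θ => Real.log ((Measure.rnDeriv ν (volume : Measure (Θ d)) θ).toReal))
        ν) := by
  classical
  set γm : Measure (Θ d) := gibbs U with hγm
  -- the density of the Gibbs measure
  set w : Θ d → ℝ≥0∞ := fun θ => ENNReal.ofReal (Real.exp (-U θ)) with hw
  have hwmeas : Measurable w := (hUmeas.neg.exp).ennreal_ofReal
  have hwne0 : ∀ᵐ θ ∂(volume : Measure (Θ d)), w θ ≠ 0 := by
    refine ae_of_all _ fun θ => ?_
    simp [hw, ENNReal.ofReal_eq_zero, not_le, Real.exp_pos]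
  have hwnetop : ∀ᵐ θ ∂(volume : Measure (Θ d)), w θ ≠ ∞ := by
    refine ae_of_all _ fun θ => ?_
    simp [hw]
  -- e^{-U} is integrable (otherwise its integral would be 0 ≠ 1)
  have hexp_int : Integrable (fun θ : Θ d => Real.exp (-U θ)) volume := by
    by_contra hcon
    rw [integral_undef hcon] at hUnorm
    norm_num at hUnorm
  -- the Gibbs measure is a probability measure
  haveI hγprob : IsProbabilityMeasure γm := by
    constructor
    rw [hγm, gibbs, withDensity_apply _ MeasurableSet.univ, Measure.restrict_univ,
      ← ofReal_integral_eq_lintegral_ofReal hexp_int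
        (ae_of_all _ fun θ => (Real.exp_pos _).le), hUnorm]
    simp
  -- U is ν-integrable
  have hUint : Integrable U ν := by
    refine Integrable.mono' (((integrable_const (1:ℝ)).add hmom).const_mul C)
      hUmeas.aestronglyMeasurable (ae_of_all _ fun θ => ?_)
    simpa [mul_add] using hUgrowth θ
  -- ν ≪ γm
  have hvolγ : (volume : Measure (Θ d)) ≪ γm :=
    withDensity_absolutelyContinuous' hwmeas.aemeasurable hwne0
  have hacγ : ν ≪ γm := hac.trans hvolγ
  -- key a.e. identity: log(dν/dγ) = U + log(dν/dθ)
  have hrd : ν.rnDeriv γm =ᵐ[ν]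
      fun θ => (w θ)⁻¹ * ν.rnDeriv volume θ :=
    hac.ae_le (Measure.rnDeriv_withDensity_right ν volume hwmeas.aemeasurable hwne0 hwnetop)
  have hpos : ∀ᵐ θ ∂ν, 0 < ν.rnDeriv volume θ := Measure.rnDeriv_pos hac
  have hlt : ∀ᵐ θ ∂ν, ν.rnDeriv volume θ < ∞ := hac.ae_le (Measure.rnDeriv_lt_top ν volume)
  have h_eq : (fun θ => Real.log ((ν.rnDeriv γm θ).toReal)) =ᵐ[ν]
      fun θ => U θ + Real.log ((ν.rnDeriv volume θ).toReal) := by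
    filter_upwards [hrd, hpos, hlt] with θ h1 h2 h3
    have hrtpos : 0 < (ν.rnDeriv volume θ).toReal := ENNReal.toReal_pos h2.ne' h3.ne
    rw [h1, ENNReal.toReal_mul, ENNReal.toReal_inv, hw]
    rw [ENNReal.toReal_ofReal (Real.exp_nonneg _),
      Real.log_mul (by positivity) hrtpos.ne', Real.log_inv, Real.log_exp]
    ring
  -- measurability of the two log-densities
  have hLmeas : Measurable (fun θ => Real.log ((ν.rnDeriv γm θ).toReal)) :=
    (Measure.measurable_rnDeriv ν γm).ennreal_toReal.log
  have hlmeas : Measurable (fun θ => Real.log ((ν.rnDeriv volume θ).toReal)) :=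
    (Measure.measurable_rnDeriv ν volume).ennreal_toReal.log
  -- the negative part of log(dν/dγ) is always ν-integrable
  have hA : Integrable (fun θ => min (Real.log ((ν.rnDeriv γm θ).toReal)) 0) ν := by
    haveI : ν.HaveLebesgueDecomposition γm := Measure.haveLebesgueDecomposition_of_finiteMeasure
    rw [← integrable_rnDeriv_smul_iff hacγ]
    refine Integrable.mono' (integrable_const (1:ℝ))
      (((Measure.measurable_rnDeriv ν γm).ennreal_toReal.smul
        (hLmeas.min measurable_const)).aestronglyMeasurable)
      (ae_of_all _ fun θ => ?_)
    have h := aux_xlog_bound (x := (ν.rnDeriv γm θ).toReal) ENNReal.toReal_nonneg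
    simpa only [smul_eq_mul, Real.norm_eq_abs] using h
  -- the negative part of log(dν/dθ) is ν-integrable too
  have hminl : Integrable (fun θ => min (Real.log ((ν.rnDeriv volume θ).toReal)) 0) ν := by
    refine Integrable.mono' (hA.abs.add hUint.abs)
      ((hlmeas.min measurable_const).aestronglyMeasurable) ?_
    filter_upwards [h_eq] with θ hθ
    have hsub : Real.log ((ν.rnDeriv volume θ).toReal)
        = Real.log ((ν.rnDeriv γm θ).toReal) - U θ := by rw [hθ]; ring
    rw [Real.norm_eq_abs, hsub]
    exact aux_minpart_bound _ _
  -- integrability of full log ↔ integrability of positive part, given negative part integrable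
  have hsplit : ∀ (g : Θ d → ℝ), Measurable g →
      Integrable (fun θ => min (g θ) 0) ν →
      (Integrable (fun θ => max (g θ) 0) ν ↔ Integrable g ν) := by
    intro g hg hmin
    constructor
    · intro hmax
      refine (hmin.add hmax).congr (ae_of_all _ fun θ => ?_)
      simp [min_add_max]
    · intro hgint
      exact hgint.pos_part
  -- integrability of the two full logs is equivalent
  have hfull : Integrable (fun θ => Real.log ((ν.rnDeriv γm θ).toReal)) ν ↔
      Integrable (fun θ => Real.log ((ν.rnDeriv volume θ).toReal)) ν := by
    constructor
    · intro hL
      refine (hL.sub hUint).congr ?_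
      filter_upwards [h_eq] with θ hθ
      simp only [Pi.sub_apply, hθ]; ring
    · intro hl
      exact (Integrable.congr (hUint.add hl) h_eq.symm)
  refine ⟨hsplit _ hLmeas hA, ?_, hsplit _ hlmeas hminl⟩
  rw [hfull, hsplit _ hlmeas hminl]

end PolicyGradientMF
end
end

section
/- Lipschitz continuity of the occupancy kernel in the policy: for any two stochastic policies π, π' (probability kernels from S to A), the occupancy kernels satisfy |d^{π'} − d^{π}|_{bK(S|S)} ≤ (γ/(1−γ)) |π' − π|_{bK(A|S)}. -/
open MeasureTheory ProbabilityTheory Filter Set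
open scoped ENNReal NNReal Topology RealInnerProductSpace

noncomputable section

namespace PolicyGradientMF

variable {S A : Type*} [MeasurableSpace S] [MeasurableSpace A]

variable {d : ℕ}

section TVAux

variable {α : Type*} [MeasurableSpace α]


def tvHalf (μ ν : Measure α) : ℝ :=
  ⨆ E : {E : Set α // MeasurableSet E}, ((μ E.1).toReal - (ν E.1).toReal)

lemma tvHalf_bddAbove (μ ν : Measure α) [IsFiniteMeasure μ] :
    BddAbove (Set.range fun E : {E : Set α // MeasurableSet E} =>
      ((μ E.1).toReal - (ν E.1).toReal)) := by
  refine ⟨(μ Set.univ).toReal, ?_⟩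
  rintro x ⟨E, rfl⟩
  have h1 : (μ E.1).toReal ≤ (μ Set.univ).toReal :=
    ENNReal.toReal_mono (measure_ne_top μ _) (measure_mono (Set.subset_univ _))
  have h2 : 0 ≤ (ν E.1).toReal := ENNReal.toReal_nonneg
  simp only
  linarith

lemma le_tvHalf (μ ν : Measure α) [IsFiniteMeasure μ] {E : Set α} (hE : MeasurableSet E) :
    (μ E).toReal - (ν E).toReal ≤ tvHalf μ ν :=
  le_ciSup (tvHalf_bddAbove μ ν) (⟨E, hE⟩ : {E : Set α // MeasurableSet E})

lemma tvHalf_nonneg (μ ν : Measure α) [IsFiniteMeasure μ] : 0 ≤ tvHalf μ ν := by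
  have := le_tvHalf μ ν MeasurableSet.empty
  simpa using this

lemma tvHalf_le {μ ν : Measure α} {c : ℝ}
    (h : ∀ E : Set α, MeasurableSet E → (μ E).toReal - (ν E).toReal ≤ c) :
    tvHalf μ ν ≤ c :=
  ciSup_le fun E => h E.1 E.2

lemma tvHalf_comm (μ ν : Measure α) [IsProbabilityMeasure μ] [IsProbabilityMeasure ν] :
    tvHalf μ ν = tvHalf ν μ := by
  have key : ∀ (μ ν : Measure α), IsProbabilityMeasure μ → IsProbabilityMeasure ν →
      tvHalf μ ν ≤ tvHalf ν μ := by
    intro μ ν hμ hν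
    refine tvHalf_le fun E hE => ?_
    have h1 : (μ E).toReal + (μ Eᶜ).toReal = 1 := by
      rw [← ENNReal.toReal_add (measure_ne_top μ _) (measure_ne_top μ _),
        measure_add_measure_compl hE, measure_univ, ENNReal.toReal_one]
    have h2 : (ν E).toReal + (ν Eᶜ).toReal = 1 := by
      rw [← ENNReal.toReal_add (measure_ne_top ν _) (measure_ne_top ν _),
        measure_add_measure_compl hE, measure_univ, ENNReal.toReal_one]
    have := le_tvHalf ν μ hE.compl
    linarith
  exact le_antisymm (key μ ν ‹_› ‹_›) (key ν μ ‹_› ‹_›)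

/-- Key lemma -/
lemma lintegral_sub_le_tvHalf (μ ν : Measure α) [IsProbabilityMeasure μ]
    [IsProbabilityMeasure ν] {f : α → ℝ≥0∞} (hf : Measurable f) (hf1 : ∀ x, f x ≤ 1) :
    (∫⁻ x, f x ∂μ).toReal - (∫⁻ x, f x ∂ν).toReal ≤ tvHalf μ ν := by
  set ρ : Measure α := μ + ν with hρ
  have hμρ : μ ≪ ρ := (Measure.le_add_right le_rfl).absolutelyContinuous
  have hνρ : ν ≪ ρ := (Measure.le_add_left le_rfl).absolutelyContinuous
  set g : α → ℝ≥0∞ := μ.rnDeriv ρ with hgdef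
  set h : α → ℝ≥0∞ := ν.rnDeriv ρ with hhdef
  have hg : Measurable g := Measure.measurable_rnDeriv _ _
  have hh : Measurable h := Measure.measurable_rnDeriv _ _
  have hμeq : ρ.withDensity g = μ := Measure.withDensity_rnDeriv_eq _ _ hμρ
  have hνeq : ρ.withDensity h = ν := Measure.withDensity_rnDeriv_eq _ _ hνρ
  set E : Set α := {x | h x < g x} with hEdef
  have hE : MeasurableSet E := measurableSet_lt hh hg
  have hμE : ∫⁻ x in E, g x ∂ρ = μ E := Measure.setLIntegral_rnDeriv hμρ E
  have hνE : ∫⁻ x in E, h x ∂ρ = ν E := Measure.setLIntegral_rnDeriv hνρ E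
  have hintμ : ∫⁻ x, f x ∂μ = ∫⁻ x, g x * f x ∂ρ := by
    rw [← hμeq, lintegral_withDensity_eq_lintegral_mul ρ hg hf]; rfl
  have hintν : ∫⁻ x, f x ∂ν = ∫⁻ x, h x * f x ∂ρ := by
    rw [← hνeq, lintegral_withDensity_eq_lintegral_mul ρ hh hf]; rfl
  -- pointwise bound
  have hpt : ∀ x, g x * f x ≤ h x * f x + (g x - h x) := by
    intro x
    calc g x * f x ≤ (h x + (g x - h x)) * f x :=
          mul_le_mul_left le_add_tsub _
    _ = h x * f x + (g x - h x) * f x := by ring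
    _ ≤ h x * f x + (g x - h x) * 1 := by
          gcongr; exact hf1 x
    _ = h x * f x + (g x - h x) := by rw [mul_one]
  have hsub_eq : ∀ x, g x - h x = E.indicator (fun x => g x - h x) x := by
    intro x
    by_cases hx : x ∈ E
    · rw [Set.indicator_of_mem hx]
    · rw [Set.indicator_of_notMem hx]
      have : g x ≤ h x := le_of_not_gt hx
      exact tsub_eq_zero_of_le this
  have hνEfin : ∫⁻ x in E, h x ∂ρ ≠ ∞ := by rw [hνE]; exact measure_ne_top ν E
  have hle_on : h ≤ᵐ[ρ.restrict E] g :=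
    (ae_restrict_iff' hE).2 (ae_of_all _ fun x hx => le_of_lt hx)
  have hsub_int : ∫⁻ x, (g x - h x) ∂ρ = μ E - ν E := by
    calc ∫⁻ x, (g x - h x) ∂ρ = ∫⁻ x, E.indicator (fun x => g x - h x) x ∂ρ :=
          lintegral_congr hsub_eq
    _ = ∫⁻ x in E, (g x - h x) ∂ρ := lintegral_indicator hE _
    _ = ∫⁻ x in E, g x ∂ρ - ∫⁻ x in E, h x ∂ρ := lintegral_sub hh hνEfin hle_on
    _ = μ E - ν E := by rw [hμE, hνE]
  have hνEle : ν E ≤ μ E := by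
    rw [← hμE, ← hνE]
    exact lintegral_mono_ae hle_on
  have hmain : ∫⁻ x, f x ∂μ ≤ ∫⁻ x, f x ∂ν + (μ E - ν E) := by
    rw [hintμ, hintν, ← hsub_int, ← lintegral_add_right (g := fun x => g x - h x) _ (hg.sub hh)]
    exact lintegral_mono hpt
  have hμfin : ∫⁻ x, f x ∂μ ≠ ∞ := by
    have : ∫⁻ x, f x ∂μ ≤ 1 := by
      calc ∫⁻ x, f x ∂μ ≤ ∫⁻ _, 1 ∂μ := lintegral_mono hf1
      _ = 1 := by simp
    exact ne_top_of_le_ne_top ENNReal.one_ne_top this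
  have hνfin : ∫⁻ x, f x ∂ν ≠ ∞ := by
    have : ∫⁻ x, f x ∂ν ≤ 1 := by
      calc ∫⁻ x, f x ∂ν ≤ ∫⁻ _, 1 ∂ν := lintegral_mono hf1
      _ = 1 := by simp
    exact ne_top_of_le_ne_top ENNReal.one_ne_top this
  have hRHSfin : ∫⁻ x, f x ∂ν + (μ E - ν E) ≠ ∞ :=
    ENNReal.add_ne_top.mpr ⟨hνfin, ne_top_of_le_ne_top (measure_ne_top μ E) tsub_le_self⟩
  have := ENNReal.toReal_mono hRHSfin hmain
  rw [ENNReal.toReal_add hνfin (ne_top_of_le_ne_top (measure_ne_top μ E) tsub_le_self),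
    ENNReal.toReal_sub_of_le hνEle (measure_ne_top μ E)] at this
  have hfin := le_tvHalf μ ν hE
  linarith

end TVAux

section IterAux

variable {S A : Type*} [MeasurableSpace S] [MeasurableSpace A]

lemma measurable_Pa {P : S → A → Measure S} (hPm : Measurable (Function.uncurry P)) (s : S) :
    Measurable fun a => P s a := hPm.comp measurable_prodMk_left

lemma stateIter_succ (P : S → A → Measure S) (π : S → Measure A) (n : ℕ) (s : S) :
    stateIter P π (n + 1) s =
      (stateIter P π n s).bind fun s' => (π s').bind fun a => P s' a := rfl

lemma measurable_stepKernel {P : S → A → Measure S} (hPm : Measurable (Function.uncurry P))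
    {π : S → Measure A} (hπp : ∀ s, IsProbabilityMeasure (π s)) (hπm : Measurable π) :
    Measurable fun s' => (π s').bind fun a => P s' a := by
  apply Measure.measurable_of_measurable_coe
  intro E hE
  have hEq : (fun s' => ((π s').bind fun a => P s' a) E)
      = fun s' => ∫⁻ a, P s' a E ∂(π s') := by
    funext s'
    exact Measure.bind_apply hE (measurable_Pa hPm _).aemeasurable
  rw [hEq]
  set κ : Kernel S A := ⟨π, hπm⟩ with hκ
  haveI : IsMarkovKernel κ := ⟨hπp⟩
  have hfm : Measurable (Function.uncurry fun (s' : S) (a : A) => P s' a E) :=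
    (Measure.measurable_coe hE).comp hPm
  exact hfm.lintegral_kernel_prod_right (κ := κ)

lemma isProb_stepKernel {P : S → A → Measure S} (hPm : Measurable (Function.uncurry P))
    (hPp : ∀ s a, IsProbabilityMeasure (P s a))
    {π : S → Measure A} (hπp : ∀ s, IsProbabilityMeasure (π s)) (s : S) :
    IsProbabilityMeasure ((π s).bind fun a => P s a) := by
  constructor
  rw [Measure.bind_apply MeasurableSet.univ (measurable_Pa hPm _).aemeasurable]
  calc ∫⁻ a, P s a Set.univ ∂(π s) = ∫⁻ _, 1 ∂(π s) :=
        lintegral_congr fun a => (hPp s a).measure_univ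
  _ = 1 := by haveI := hπp s; simp

lemma isProb_stateIter {P : S → A → Measure S} (hPm : Measurable (Function.uncurry P))
    (hPp : ∀ s a, IsProbabilityMeasure (P s a))
    {π : S → Measure A} (hπp : ∀ s, IsProbabilityMeasure (π s)) (hπm : Measurable π) :
    ∀ (n : ℕ) (s : S), IsProbabilityMeasure (stateIter P π n s) := by
  intro n
  induction n with
  | zero => intro s; exact Measure.dirac.isProbabilityMeasure
  | succ n ih =>
    intro s
    rw [stateIter_succ]
    constructor
    rw [Measure.bind_apply MeasurableSet.univ (measurable_stepKernel hPm hπp hπm).aemeasurable]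
    calc ∫⁻ s', ((π s').bind fun a => P s' a) Set.univ ∂(stateIter P π n s)
        = ∫⁻ _, 1 ∂(stateIter P π n s) :=
          lintegral_congr fun s' => (isProb_stepKernel hPm hPp hπp s').measure_univ
    _ = 1 := by haveI := ih s; simp

lemma tvHalf_stateIter_le {P : S → A → Measure S} (hPm : Measurable (Function.uncurry P))
    (hPp : ∀ s a, IsProbabilityMeasure (P s a))
    {π π' : S → Measure A}
    (hπp : ∀ s, IsProbabilityMeasure (π s)) (hπ'p : ∀ s, IsProbabilityMeasure (π' s))
    (hπm : Measurable π) (hπ'm : Measurable π') {c : ℝ} (hc : 0 ≤ c)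
    (hstep : ∀ s, tvHalf (π' s) (π s) ≤ c) :
    ∀ (n : ℕ) (s : S), tvHalf (stateIter P π' n s) (stateIter P π n s) ≤ n * c := by
  set K : S → Measure S := fun s' => (π s').bind fun a => P s' a with hKdef
  set K' : S → Measure S := fun s' => (π' s').bind fun a => P s' a with hK'def
  have hK : Measurable K := measurable_stepKernel hPm hπp hπm
  have hK' : Measurable K' := measurable_stepKernel hPm hπ'p hπ'm
  have hKp : ∀ s', IsProbabilityMeasure (K s') := isProb_stepKernel hPm hPp hπp
  have hK'p : ∀ s', IsProbabilityMeasure (K' s') := isProb_stepKernel hPm hPp hπ'p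
  -- step kernel TV bound
  have hKstep : ∀ s', tvHalf (K' s') (K s') ≤ c := by
    intro s'
    refine tvHalf_le fun E hE => ?_
    have hmeasE : Measurable fun a : A => P s' a E :=
      (Measure.measurable_coe hE).comp (measurable_Pa hPm s')
    rw [show K' s' E = ∫⁻ a, P s' a E ∂(π' s') from
        Measure.bind_apply hE (measurable_Pa hPm _).aemeasurable,
      show K s' E = ∫⁻ a, P s' a E ∂(π s') from
        Measure.bind_apply hE (measurable_Pa hPm _).aemeasurable]
    haveI := hπ'p s'; haveI := hπp s'
    refine le_trans (lintegral_sub_le_tvHalf (π' s') (π s') hmeasE fun a => ?_) (hstep s')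
    haveI := hPp s' a
    exact prob_le_one
  intro n
  induction n with
  | zero =>
    intro s
    simp only [Nat.cast_zero, zero_mul]
    refine tvHalf_le fun E hE => ?_
    simp [stateIter]
  | succ n ih =>
    intro s
    haveI h'n := isProb_stateIter hPm hPp hπ'p hπ'm n s
    haveI hn := isProb_stateIter hPm hPp hπp hπm n s
    refine tvHalf_le fun E hE => ?_
    rw [stateIter_succ, stateIter_succ,
      Measure.bind_apply hE hK'.aemeasurable, Measure.bind_apply hE hK.aemeasurable]
    have hf'm : Measurable fun s' => K' s' E := (Measure.measurable_coe hE).comp hK'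
    have hf'1 : ∀ s', K' s' E ≤ 1 := fun s' => by haveI := hK'p s'; exact prob_le_one
    have hf1 : ∀ s', K s' E ≤ 1 := fun s' => by haveI := hKp s'; exact prob_le_one
    have h1 : (∫⁻ s', K' s' E ∂(stateIter P π' n s)).toReal
        - (∫⁻ s', K' s' E ∂(stateIter P π n s)).toReal ≤ n * c :=
      le_trans (lintegral_sub_le_tvHalf _ _ hf'm hf'1) (ih s)
    have hpt : ∀ s', K' s' E ≤ K s' E + ENNReal.ofReal c := by
      intro s'
      have hd := (le_tvHalf (K' s') (K s') hE).trans (hKstep s')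
      rw [← ENNReal.ofReal_toReal (measure_ne_top (K' s') E),
        ← ENNReal.ofReal_toReal (measure_ne_top (K s') E), ← ENNReal.ofReal_add
          ENNReal.toReal_nonneg hc]
      exact ENNReal.ofReal_le_ofReal (by linarith)
    have hle2 : ∫⁻ s', K' s' E ∂(stateIter P π n s)
        ≤ (∫⁻ s', K s' E ∂(stateIter P π n s)) + ENNReal.ofReal c := by
      calc ∫⁻ s', K' s' E ∂(stateIter P π n s)
          ≤ ∫⁻ s', (K s' E + ENNReal.ofReal c) ∂(stateIter P π n s) := lintegral_mono hpt
      _ = (∫⁻ s', K s' E ∂(stateIter P π n s)) + ENNReal.ofReal c := by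
          rw [lintegral_add_right _ measurable_const, lintegral_const, measure_univ, mul_one]
    have hfinK : ∫⁻ s', K s' E ∂(stateIter P π n s) ≠ ∞ := by
      refine ne_top_of_le_ne_top ENNReal.one_ne_top ?_
      calc ∫⁻ s', K s' E ∂(stateIter P π n s) ≤ ∫⁻ _, 1 ∂(stateIter P π n s) :=
            lintegral_mono hf1
      _ = 1 := by simp
    have h2 : (∫⁻ s', K' s' E ∂(stateIter P π n s)).toReal
        - (∫⁻ s', K s' E ∂(stateIter P π n s)).toReal ≤ c := by
      have := ENNReal.toReal_mono
        (ENNReal.add_ne_top.mpr ⟨hfinK, ENNReal.ofReal_ne_top⟩) hle2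
      rw [ENNReal.toReal_add hfinK ENNReal.ofReal_ne_top, ENNReal.toReal_ofReal hc] at this
      linarith
    push_cast
    linarith

end IterAux

/-- **Lipschitz continuity of the occupancy kernel in the policy**:
`|d^{π'} − d^{π}|_{bK(S|S)} ≤ (γ/(1−γ)) |π' − π|_{bK(A|S)}`. -/
theorem occupancy_lipschitz_in_policy
    {S A : Type*} [MeasurableSpace S] [MeasurableSpace A]
    (P : S → A → Measure S) (hPm : Measurable (Function.uncurry P))
    (hPp : ∀ s a, IsProbabilityMeasure (P s a))
    (γ : ℝ) (hγ0 : 0 ≤ γ) (hγ1 : γ < 1)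
    (π π' : S → Measure A)
    (hπp : ∀ s, IsProbabilityMeasure (π s)) (hπ'p : ∀ s, IsProbabilityMeasure (π' s))
    (hπm : Measurable π) (hπ'm : Measurable π') :
    ∀ s : S,
      tvDist (occupancy P γ π' s) (occupancy P γ π s) ≤
        γ / (1 - γ) * ⨆ s' : S, tvDist (π' s') (π s') := by
  intro s0
  -- abbreviations
  set ε : ℝ := ⨆ s' : S, tvDist (π' s') (π s') with hεdef
  haveI : ∀ n s, IsProbabilityMeasure (stateIter P π n s) := isProb_stateIter hPm hPp hπp hπm
  haveI : ∀ n s, IsProbabilityMeasure (stateIter P π' n s) := isProb_stateIter hPm hPp hπ'p hπ'm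
  have hγne : (1 : ℝ) - γ ≠ 0 := by linarith
  -- bound the sup family
  have hBdd : BddAbove (Set.range fun s' : S => tvDist (π' s') (π s')) := by
    refine ⟨2, ?_⟩
    rintro x ⟨s', rfl⟩
    haveI := hπ'p s'; haveI := hπp s'
    have h1 : tvHalf (π' s') (π s') ≤ 1 := by
      refine tvHalf_le fun E hE => ?_
      have := prob_le_one (μ := π' s') (s := E)
      have h2 : ((π' s') E).toReal ≤ 1 := by
        simpa using ENNReal.toReal_mono ENNReal.one_ne_top this
      have h3 : (0:ℝ) ≤ ((π s') E).toReal := ENNReal.toReal_nonneg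
      linarith
    have h2 : tvHalf (π s') (π' s') ≤ 1 := by
      refine tvHalf_le fun E hE => ?_
      have := prob_le_one (μ := π s') (s := E)
      have h2 : ((π s') E).toReal ≤ 1 := by
        simpa using ENNReal.toReal_mono ENNReal.one_ne_top this
      have h3 : (0:ℝ) ≤ ((π' s') E).toReal := ENNReal.toReal_nonneg
      linarith
    show tvDist (π' s') (π s') ≤ 2
    rw [show tvDist (π' s') (π s') = tvHalf (π' s') (π s') + tvHalf (π s') (π' s') from rfl]
    linarith
  set c : ℝ := ε / 2 with hcdef
  have hε0 : 0 ≤ ε := by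
    have h1 : tvDist (π' s0) (π s0) ≤ ε := le_ciSup hBdd s0
    haveI := hπ'p s0; haveI := hπp s0
    have h2 : 0 ≤ tvDist (π' s0) (π s0) := by
      rw [show tvDist (π' s0) (π s0) = tvHalf (π' s0) (π s0) + tvHalf (π s0) (π' s0) from rfl]
      have := tvHalf_nonneg (π' s0) (π s0)
      have := tvHalf_nonneg (π s0) (π' s0)
      linarith
    linarith
  have hc0 : 0 ≤ c := by positivity
  -- per-state one-step bounds
  have hstep : ∀ s', tvHalf (π' s') (π s') ≤ c := by
    intro s'
    haveI := hπ'p s'; haveI := hπp s'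
    have hcomm := tvHalf_comm (π' s') (π s')
    have h1 : tvDist (π' s') (π s') ≤ ε := le_ciSup hBdd s'
    rw [show tvDist (π' s') (π s') = tvHalf (π' s') (π s') + tvHalf (π s') (π' s') from rfl]
      at h1
    rw [hcdef]
    linarith
  have hstep' : ∀ s', tvHalf (π s') (π' s') ≤ c := by
    intro s'
    haveI := hπ'p s'; haveI := hπp s'
    rw [tvHalf_comm (π s') (π' s')]
    exact hstep s'
  have hIter : ∀ (n : ℕ) s, tvHalf (stateIter P π' n s) (stateIter P π n s) ≤ n * c :=
    tvHalf_stateIter_le hPm hPp hπp hπ'p hπm hπ'm hc0 hstep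
  have hIter' : ∀ (n : ℕ) s, tvHalf (stateIter P π n s) (stateIter P π' n s) ≤ n * c :=
    tvHalf_stateIter_le hPm hPp hπ'p hπp hπ'm hπm hc0 hstep'
  -- occupancy applied to sets
  have hcn : ∀ n : ℕ, 0 ≤ (1 - γ) * γ ^ n := fun n =>
    mul_nonneg (by linarith) (pow_nonneg hγ0 n)
  have hocc : ∀ (ρ : S → Measure A), (∀ n s, IsProbabilityMeasure (stateIter P ρ n s)) →
      ∀ E : Set S, MeasurableSet E →
      ((occupancy P γ ρ s0) E).toReal
        = ∑' n : ℕ, (1 - γ) * γ ^ n * ((stateIter P ρ n s0) E).toReal := by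
    intro ρ hρ E hE
    rw [occupancy, Measure.sum_apply _ hE]
    have hterm : ∀ n : ℕ,
        ((ENNReal.ofReal ((1 - γ) * γ ^ n)) • stateIter P ρ n s0) E
          = ENNReal.ofReal ((1 - γ) * γ ^ n) * (stateIter P ρ n s0) E := by
      intro n; rw [Measure.smul_apply, smul_eq_mul]
    rw [tsum_congr hterm, ENNReal.tsum_toReal_eq fun n =>
      ENNReal.mul_ne_top ENNReal.ofReal_ne_top (measure_ne_top _ _)]
    refine tsum_congr fun n => ?_
    rw [ENNReal.toReal_mul, ENNReal.toReal_ofReal (hcn n)]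
  -- summability facts
  have hγabs : |γ| < 1 := by rw [abs_of_nonneg hγ0]; exact hγ1
  have hgeo : Summable fun n : ℕ => (1 - γ) * γ ^ n :=
    (summable_geometric_of_lt_one hγ0 hγ1).mul_left _
  have hd : Summable fun n : ℕ => (1 - γ) * γ ^ n * (n * c) := by
    have h1 : Summable fun n : ℕ => (n : ℝ) ^ 1 * γ ^ n :=
      summable_pow_mul_geometric_of_norm_lt_one 1 (by rwa [Real.norm_eq_abs])
    have h2 : Summable fun n : ℕ => ((1 - γ) * c) * ((n : ℝ) ^ 1 * γ ^ n) := h1.mul_left _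
    refine h2.congr fun n => ?_
    ring
  have hsum_d : ∑' n : ℕ, (1 - γ) * γ ^ n * (n * c) = γ / (1 - γ) * c := by
    have h1 : (fun n : ℕ => (1 - γ) * γ ^ n * (n * c))
        = fun n : ℕ => ((1 - γ) * c) * ((n : ℝ) * γ ^ n) := by
      funext n; ring
    rw [h1, tsum_mul_left, tsum_coe_mul_geometric_of_norm_lt_one
      (by rwa [Real.norm_eq_abs])]
    field_simp
  -- occupancy tvHalf bound, generic in the two policies
  have hhalf : ∀ (ρ ρ' : S → Measure A),
      (∀ n s, IsProbabilityMeasure (stateIter P ρ n s)) →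
      (∀ n s, IsProbabilityMeasure (stateIter P ρ' n s)) →
      (∀ (n : ℕ) s, tvHalf (stateIter P ρ' n s) (stateIter P ρ n s) ≤ n * c) →
      tvHalf (occupancy P γ ρ' s0) (occupancy P γ ρ s0) ≤ γ / (1 - γ) * c := by
    intro ρ ρ' hρ hρ' hIt
    refine tvHalf_le fun E hE => ?_
    rw [hocc ρ' hρ' E hE, hocc ρ hρ E hE]
    have hb1 : ∀ (σ : S → Measure A) (hσ : ∀ n s, IsProbabilityMeasure (stateIter P σ n s))
        (n : ℕ), ((stateIter P σ n s0) E).toReal ≤ 1 := by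
      intro σ hσ n
      haveI := hσ n s0
      simpa using ENNReal.toReal_mono ENNReal.one_ne_top (prob_le_one)
    have ha : Summable fun n : ℕ => (1 - γ) * γ ^ n * ((stateIter P ρ' n s0) E).toReal := by
      refine Summable.of_nonneg_of_le
        (fun n => mul_nonneg (hcn n) ENNReal.toReal_nonneg) (fun n => ?_) hgeo
      calc (1 - γ) * γ ^ n * ((stateIter P ρ' n s0) E).toReal
          ≤ (1 - γ) * γ ^ n * 1 := by
            have := hb1 ρ' hρ' n
            exact mul_le_mul_of_nonneg_left this (hcn n)
      _ = (1 - γ) * γ ^ n := mul_one _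
    have hb : Summable fun n : ℕ => (1 - γ) * γ ^ n * ((stateIter P ρ n s0) E).toReal := by
      refine Summable.of_nonneg_of_le
        (fun n => mul_nonneg (hcn n) ENNReal.toReal_nonneg) (fun n => ?_) hgeo
      calc (1 - γ) * γ ^ n * ((stateIter P ρ n s0) E).toReal
          ≤ (1 - γ) * γ ^ n * 1 := by
            have := hb1 ρ hρ n
            exact mul_le_mul_of_nonneg_left this (hcn n)
      _ = (1 - γ) * γ ^ n := mul_one _
    rw [← Summable.tsum_sub ha hb]
    have hptE : ∀ n : ℕ,
        (1 - γ) * γ ^ n * ((stateIter P ρ' n s0) E).toReal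
          - (1 - γ) * γ ^ n * ((stateIter P ρ n s0) E).toReal
          ≤ (1 - γ) * γ ^ n * (n * c) := by
      intro n
      have h1 : ((stateIter P ρ' n s0) E).toReal - ((stateIter P ρ n s0) E).toReal ≤ n * c := by
        haveI := hρ' n s0
        exact le_trans (le_tvHalf _ _ hE) (hIt n s0)
      have h2 := mul_le_mul_of_nonneg_left h1 (hcn n)
      nlinarith [hcn n]
    calc ∑' n : ℕ, ((1 - γ) * γ ^ n * ((stateIter P ρ' n s0) E).toReal
          - (1 - γ) * γ ^ n * ((stateIter P ρ n s0) E).toReal)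
        ≤ ∑' n : ℕ, (1 - γ) * γ ^ n * (n * c) := Summable.tsum_le_tsum hptE (ha.sub hb) hd
    _ = γ / (1 - γ) * c := hsum_d
  have hH1 := hhalf π π' ‹_› ‹_› hIter
  have hH2 := hhalf π' π ‹_› ‹_› hIter'
  rw [show tvDist (occupancy P γ π' s0) (occupancy P γ π s0)
      = tvHalf (occupancy P γ π' s0) (occupancy P γ π s0)
        + tvHalf (occupancy P γ π s0) (occupancy P γ π' s0) from rfl]
  have : γ / (1 - γ) * c + γ / (1 - γ) * c = γ / (1 - γ) * ε := by
    rw [hcdef]; ring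
  linarith


end PolicyGradientMF
end
end

section
/- Lipschitz continuity of the mean-field softmax policy in the parameter measure: if f ∈ A_1, then for all ν, ν' ∈ P_1(ℝ^d), sup_{s∈S} |π_{ν'}(·|s) − π_ν(·|s)|_{TV} ≤ 2 |f|_{A_1} W_1(ν', ν). -/
open MeasureTheory ProbabilityTheory Filter Set
open scoped ENNReal NNReal Topology RealInnerProductSpace

noncomputable section

namespace PolicyGradientMF

variable {S A : Type*} [MeasurableSpace S] [MeasurableSpace A]

variable {d : ℕ}

private lemma exp_core {x : ℝ} (hx : 0 ≤ x) :
    Real.exp x - Real.exp (-x) ≤ x * (Real.exp x + Real.exp (-x)) := by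
  set F : ℝ → ℝ := fun z => z * (Real.exp z + Real.exp (-z)) - (Real.exp z - Real.exp (-z))
    with hF
  have key : ∀ y : ℝ, HasDerivAt F (y * (Real.exp y - Real.exp (-y))) y := by
    intro y
    have h1 : HasDerivAt (fun z : ℝ => Real.exp (-z)) (-Real.exp (-y)) y := by
      simpa [Function.comp_def] using (Real.hasDerivAt_exp (-y)).comp y ((hasDerivAt_id y).neg)
    have h2 := ((hasDerivAt_id y).mul ((Real.hasDerivAt_exp y).add h1)).sub
      ((Real.hasDerivAt_exp y).sub h1)
    simp only [id_eq, one_mul] at h2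
    refine h2.congr_deriv ?_
    simp only [Pi.add_apply]; ring
  have mono : MonotoneOn F (Set.Ici (0:ℝ)) := by
    apply monotoneOn_of_deriv_nonneg (convex_Ici 0)
    · exact Continuous.continuousOn (by continuity)
    · intro y _
      exact (key y).differentiableAt.differentiableWithinAt
    · intro y hy
      rw [interior_Ici, Set.mem_Ioi] at hy
      rw [(key y).deriv]
      have h3 : Real.exp (-y) ≤ Real.exp y := Real.exp_le_exp.mpr (by linarith [hy.le])
      have := hy.le
      nlinarith
  have h0 := mono Set.self_mem_Ici (Set.mem_Ici.mpr hx) hx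
  simp only [hF, zero_mul, Real.exp_zero, neg_zero, zero_sub, sub_self] at h0
  linarith

private lemma tanh_core {x u u' : ℝ} (hx : 0 ≤ x)
    (h1 : u' - u ≤ (Real.exp (2*x) - 1) * u)
    (h2 : u' - u ≤ (1 - Real.exp (-(2*x))) * (1 - u)) :
    u' - u ≤ x := by
  have hs : Real.exp (-x) ≤ Real.exp x := Real.exp_le_exp.mpr (by linarith)
  have hprod : Real.exp x * Real.exp (-x) = 1 := by
    rw [← Real.exp_add]; simp
  have h2x : Real.exp (2*x) = Real.exp x * Real.exp x := by
    rw [← Real.exp_add]; ring_nf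
  have h2x' : Real.exp (-(2*x)) = Real.exp (-x) * Real.exp (-x) := by
    rw [← Real.exp_add]; ring_nf
  have core := exp_core hx
  set a := Real.exp (2*x) - 1 with ha
  set b := 1 - Real.exp (-(2*x)) with hb
  have hanneg : 0 ≤ a := by
    have : (1:ℝ) ≤ Real.exp (2*x) := Real.one_le_exp (by linarith)
    simp only [ha]; linarith
  have hbnneg : 0 ≤ b := by
    have : Real.exp (-(2*x)) ≤ 1 := Real.exp_le_one_iff.mpr (by linarith)
    simp only [hb]; linarith
  have hdnn : 0 ≤ Real.exp x - Real.exp (-x) := by linarith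
  have hab : a * b ≤ x * (a + b) := by
    have h4 := mul_le_mul_of_nonneg_left core hdnn
    simp only [ha, hb]
    nlinarith [h4, hprod, h2x, h2x']
  rcases eq_or_lt_of_le (add_nonneg hanneg hbnneg) with he | hlt
  · have ha0 : a = 0 := by linarith
    rw [ha0, zero_mul] at h1
    linarith
  · nlinarith [mul_le_mul_of_nonneg_left h1 hbnneg, mul_le_mul_of_nonneg_left h2 hanneg]

namespace PolicyGradientMFAux
open MeasureTheory PolicyGradientMF

private lemma integral_diff_le_wasserstein {d : ℕ}
    (ν ν' : Measure (Θ d)) [IsProbabilityMeasure ν] [IsProbabilityMeasure ν']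
    (hν : Integrable (fun θ : Θ d => ‖θ‖) ν) (hν' : Integrable (fun θ : Θ d => ‖θ‖) ν')
    (φ : Θ d → ℝ) (hφm : Measurable φ) {L : ℝ} (hL : 0 ≤ L)
    (hφl : LipschitzWith L.toNNReal φ) :
    |∫ θ, φ θ ∂ν' - ∫ θ, φ θ ∂ν| ≤ L * wasserstein 1 ν' ν := by
  classical
  set c : Measure (Θ d × Θ d) → ℝ≥0∞ := fun γ => ∫⁻ q, edist q.1 q.2 ∂γ with hc
  have hW : wasserstein 1 ν' ν = (⨅ γ : couplings ν' ν, c γ.1).toReal := by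
    simp only [wasserstein, ENNReal.rpow_one, one_div_one, hc]
  -- the product coupling
  have prodMem : ν'.prod ν ∈ couplings ν' ν := by
    constructor
    · simp [Measure.map_fst_prod]
    · simp [Measure.map_snd_prod]
  have hmnorm : Measurable fun θ : Θ d => (‖θ‖₊ : ℝ≥0∞) :=
    measurable_nnnorm.coe_nnreal_ennreal
  have hlnorm : ∀ (μ : Measure (Θ d)), Integrable (fun θ : Θ d => ‖θ‖) μ →
      ∫⁻ θ, (‖θ‖₊ : ℝ≥0∞) ∂μ ≠ ∞ := by
    intro μ hint
    have h := (hasFiniteIntegral_def _ _).mp hint.2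
    simpa [nnnorm_norm, enorm_eq_nnnorm] using h.ne
  have hprodfin : c (ν'.prod ν) ≠ ∞ := by
    have hle : c (ν'.prod ν) ≤ ∫⁻ q : Θ d × Θ d, ((‖q.1‖₊ : ℝ≥0∞) + ‖q.2‖₊) ∂(ν'.prod ν) := by
      apply lintegral_mono
      intro q
      calc edist q.1 q.2 ≤ edist q.1 0 + edist 0 q.2 := edist_triangle _ _ _
        _ = (‖q.1‖₊ : ℝ≥0∞) + ‖q.2‖₊ := by
            rw [edist_zero_right, edist_zero_left, enorm_eq_nnnorm]
    have hsplit : ∫⁻ q : Θ d × Θ d, ((‖q.1‖₊ : ℝ≥0∞) + ‖q.2‖₊) ∂(ν'.prod ν)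
        = ∫⁻ θ, (‖θ‖₊ : ℝ≥0∞) ∂ν' + ∫⁻ θ, (‖θ‖₊ : ℝ≥0∞) ∂ν := by
      have hm1 : Measurable fun q : Θ d × Θ d => (‖q.1‖₊ : ℝ≥0∞) := hmnorm.comp measurable_fst
      rw [lintegral_add_left hm1]
      have e1 : ∫⁻ q : Θ d × Θ d, (‖q.1‖₊ : ℝ≥0∞) ∂(ν'.prod ν)
          = ∫⁻ θ, (‖θ‖₊ : ℝ≥0∞) ∂((ν'.prod ν).map Prod.fst) :=
        (lintegral_map hmnorm measurable_fst).symm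
      have e2 : ∫⁻ q : Θ d × Θ d, (‖q.2‖₊ : ℝ≥0∞) ∂(ν'.prod ν)
          = ∫⁻ θ, (‖θ‖₊ : ℝ≥0∞) ∂((ν'.prod ν).map Prod.snd) :=
        (lintegral_map hmnorm measurable_snd).symm
      rw [prodMem.1] at e1
      rw [prodMem.2] at e2
      rw [e1, e2]
    refine ne_top_of_le_ne_top ?_ hle
    rw [hsplit]
    exact ENNReal.add_ne_top.mpr ⟨hlnorm _ hν', hlnorm _ hν⟩
  have hIfin : (⨅ γ : couplings ν' ν, c γ.1) ≠ ∞ :=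
    ne_top_of_le_ne_top hprodfin (iInf_le (fun γ : couplings ν' ν => c γ.1)
      (⟨ν'.prod ν, prodMem⟩ : couplings ν' ν))
  -- integrability of φ
  have hφbd : ∀ θ : Θ d, ‖φ θ‖ ≤ |φ 0| + L * ‖θ‖ := by
    intro θ
    have := hφl.dist_le_mul θ 0
    rw [Real.coe_toNNReal _ hL] at this
    rw [Real.norm_eq_abs]
    have h1 : |φ θ - φ 0| ≤ L * ‖θ‖ := by
      simpa [Real.dist_eq, dist_eq_norm] using this
    calc |φ θ| = |φ 0 + (φ θ - φ 0)| := by ring_nf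
      _ ≤ |φ 0| + |φ θ - φ 0| := abs_add_le _ _
      _ ≤ |φ 0| + L * ‖θ‖ := by linarith
  have hφint : ∀ (μ : Measure (Θ d)) (_ : IsFiniteMeasure μ),
      Integrable (fun θ : Θ d => ‖θ‖) μ → Integrable φ μ := by
    intro μ hfin hint
    exact Integrable.mono' ((integrable_const (|φ 0|)).add (hint.const_mul L))
      hφm.aestronglyMeasurable (Filter.Eventually.of_forall hφbd)
  -- per-coupling bound
  have key : ∀ γ : Measure (Θ d × Θ d), γ ∈ couplings ν' ν → c γ ≠ ∞ →
      |∫ θ, φ θ ∂ν' - ∫ θ, φ θ ∂ν| ≤ L * (c γ).toReal := by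
    intro γ hγ hγfin
    have hprob : IsProbabilityMeasure γ := by
      constructor
      have : γ.map Prod.fst Set.univ = (1 : ℝ≥0∞) := by rw [hγ.1]; simp
      rwa [Measure.map_apply measurable_fst MeasurableSet.univ, Set.preimage_univ] at this
    have h1 : ∫ θ, φ θ ∂ν' = ∫ q : Θ d × Θ d, φ q.1 ∂γ := by
      rw [← hγ.1, integral_map measurable_fst.aemeasurable hφm.aestronglyMeasurable]
    have h2 : ∫ θ, φ θ ∂ν = ∫ q : Θ d × Θ d, φ q.2 ∂γ := by
      rw [← hγ.2, integral_map measurable_snd.aemeasurable hφm.aestronglyMeasurable]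
    have hint1 : Integrable (fun q : Θ d × Θ d => φ q.1) γ := by
      have := hφint ν' inferInstance hν'
      rw [← hγ.1] at this
      exact (integrable_map_measure hφm.aestronglyMeasurable
        measurable_fst.aemeasurable).mp this
    have hint2 : Integrable (fun q : Θ d × Θ d => φ q.2) γ := by
      have := hφint ν inferInstance hν
      rw [← hγ.2] at this
      exact (integrable_map_measure hφm.aestronglyMeasurable
        measurable_snd.aemeasurable).mp this
    have hdistm : Measurable fun q : Θ d × Θ d => dist q.1 q.2 :=
      (continuous_dist.comp (continuous_fst.prodMk continuous_snd)).measurable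
    have hintd : Integrable (fun q : Θ d × Θ d => dist q.1 q.2) γ := by
      refine ⟨hdistm.aestronglyMeasurable, (hasFiniteIntegral_iff_ofReal
        (Filter.Eventually.of_forall fun q => dist_nonneg)).mpr ?_⟩
      have : ∀ q : Θ d × Θ d, ENNReal.ofReal (dist q.1 q.2) = edist q.1 q.2 := fun q =>
        (edist_dist _ _).symm
      simp_rw [this]
      exact hγfin.lt_top
    have hd : ∫ θ, φ θ ∂ν' - ∫ θ, φ θ ∂ν = ∫ q : Θ d × Θ d, (φ q.1 - φ q.2) ∂γ := by
      rw [h1, h2, integral_sub hint1 hint2]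
    rw [hd]
    have habs : |∫ q : Θ d × Θ d, (φ q.1 - φ q.2) ∂γ| ≤ ∫ q : Θ d × Θ d, L * dist q.1 q.2 ∂γ := by
      rw [← Real.norm_eq_abs]
      refine (norm_integral_le_integral_norm _).trans ?_
      refine integral_mono (hint1.sub hint2).norm (hintd.const_mul L) ?_
      intro q
      have := hφl.dist_le_mul q.1 q.2
      rw [Real.coe_toNNReal _ hL] at this
      simpa [Real.norm_eq_abs, Real.dist_eq] using this
    refine habs.trans ?_
    have hde : ∫ q : Θ d × Θ d, dist q.1 q.2 ∂γ = (c γ).toReal := by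
      rw [integral_eq_lintegral_of_nonneg_ae (Filter.Eventually.of_forall fun q => dist_nonneg)
        hdistm.aestronglyMeasurable]
      congr 1
      refine lintegral_congr fun q => (edist_dist _ _).symm
    rw [integral_const_mul, hde]
  rw [hW]
  rcases eq_or_lt_of_le hL with hL0 | hLpos
  · have := key (ν'.prod ν) prodMem hprodfin
    rw [← hL0] at this ⊢
    simpa using this
  -- ε-argument
  have hfinal : ∀ η : ℝ, 0 < η →
      |∫ θ, φ θ ∂ν' - ∫ θ, φ θ ∂ν| ≤ L * (⨅ γ : couplings ν' ν, c γ.1).toReal + η := by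
    intro η hη
    have hεpos : (0:ℝ) < η / L := div_pos hη hLpos
    have hlt : (⨅ γ : couplings ν' ν, c γ.1)
        < (⨅ γ : couplings ν' ν, c γ.1) + ENNReal.ofReal (η / L) :=
      ENNReal.lt_add_right hIfin (ENNReal.ofReal_pos.mpr hεpos).ne'
    obtain ⟨γ, hγlt⟩ := iInf_lt_iff.mp hlt
    have hγfin : c γ.1 ≠ ∞ :=
      (hγlt.trans_le le_top).ne
    refine (key γ.1 γ.2 hγfin).trans ?_
    have : (c γ.1).toReal ≤ (⨅ γ : couplings ν' ν, c γ.1).toReal + η / L := by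
      have h5 : (c γ.1).toReal ≤ ((⨅ γ : couplings ν' ν, c γ.1) + ENNReal.ofReal (η / L)).toReal :=
        ENNReal.toReal_mono (by finiteness) hγlt.le
      rwa [ENNReal.toReal_add hIfin ENNReal.ofReal_ne_top,
        ENNReal.toReal_ofReal hεpos.le] at h5
    calc L * (c γ.1).toReal ≤ L * ((⨅ γ : couplings ν' ν, c γ.1).toReal + η / L) := by
          gcongr
      _ = L * (⨅ γ : couplings ν' ν, c γ.1).toReal + η := by
          rw [mul_add, mul_div_cancel₀ _ hLpos.ne']
  by_contra hcon
  push_neg at hcon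
  have := hfinal ((|∫ θ, φ θ ∂ν' - ∫ θ, φ θ ∂ν| - L * (⨅ γ : couplings ν' ν, c γ.1).toReal) / 2)
    (by linarith)
  linarith

end PolicyGradientMFAux


/-- **Lipschitz continuity of the mean-field softmax policy in the parameter measure**:
if `f ∈ A_1` (with `A_1`-bound `Cf1`), then
`sup_s |π_{ν'}(·|s) − π_ν(·|s)|_{TV} ≤ 2 |f|_{A_1} W_1(ν',ν)`. -/
theorem softmax_policy_lipschitz_in_measure
    {S A : Type*} [MeasurableSpace S] [MeasurableSpace A]
    (μA : Measure A) [IsFiniteMeasure μA] (hμA : μA ≠ 0)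
    {d : ℕ} (f : Θ d → S → A → ℝ)
    (hfm : Measurable fun q : Θ d × S × A => f q.1 q.2.1 q.2.2)
    (hfd : ∀ s : S, ∀ᵐ a ∂μA, Differentiable ℝ fun θ : Θ d => f θ s a)
    (Cf1 : ℝ)
    (hf1 : ∀ s : S, ∀ᵐ a ∂μA, ∀ j : ℕ, j ≤ 1 → ∀ θ : Θ d,
      ‖iteratedFDeriv ℝ j (fun θ' => f θ' s a) θ‖ ≤ Cf1)
    (ν ν' : Measure (Θ d)) [IsProbabilityMeasure ν] [IsProbabilityMeasure ν']
    (hν : Integrable (fun θ : Θ d => ‖θ‖) ν) (hν' : Integrable (fun θ : Θ d => ‖θ‖) ν') :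
    ∀ s : S,
      tvDist (softmaxPolicy f μA ν' s) (softmaxPolicy f μA ν s) ≤
        2 * Cf1 * wasserstein 1 ν' ν := by
  intro s
  have hWnn : (0:ℝ) ≤ wasserstein 1 ν' ν := ENNReal.toReal_nonneg
  haveI hne : (ae μA).NeBot := ae_neBot.mpr hμA
  have hCf1 : 0 ≤ Cf1 := by
    obtain ⟨a, ha⟩ := (hf1 s).exists
    exact le_trans (norm_nonneg _) (ha 0 (by norm_num) 0)
  set W := wasserstein 1 ν' ν with hWdef
  set δ := Cf1 * W with hδdef
  have hδ : 0 ≤ δ := mul_nonneg hCf1 hWnn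
  have hφmeas : ∀ a : A, Measurable fun θ : Θ d => f θ s a := by
    intro a
    have hpair : Measurable fun θ : Θ d => (θ, (s, a)) := measurable_id.prodMk measurable_const
    exact hfm.comp hpair
  set g : A → ℝ := fun a => ∫ θ, f θ s a ∂ν with hgdef
  set g' : A → ℝ := fun a => ∫ θ, f θ s a ∂ν' with hg'def
  have hm2 : Measurable fun p : A × Θ d => f p.2 s p.1 :=
    hfm.comp (measurable_snd.prodMk (measurable_const.prodMk measurable_fst))
  have hgm : StronglyMeasurable g := hm2.stronglyMeasurable.integral_prod_right'
  have hgm' : StronglyMeasurable g' := hm2.stronglyMeasurable.integral_prod_right'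
  -- a.e. facts about g, g'
  have hae : ∀ᵐ a ∂μA, |g' a - g a| ≤ δ ∧ |g a| ≤ Cf1 ∧ |g' a| ≤ Cf1 := by
    filter_upwards [hfd s, hf1 s] with a hdiff hbd
    have hb0 : ∀ θ, |f θ s a| ≤ Cf1 := by
      intro θ
      have := hbd 0 (by norm_num) θ
      rwa [norm_iteratedFDeriv_zero, Real.norm_eq_abs] at this
    have hfder : ∀ θ, ‖fderiv ℝ (fun θ' => f θ' s a) θ‖₊ ≤ Cf1.toNNReal := by
      intro θ
      have heq : ‖fderiv ℝ (fun θ' => f θ' s a) θ‖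
          = ‖iteratedFDeriv ℝ 1 (fun θ' => f θ' s a) θ‖ := by
        rw [← norm_iteratedFDeriv_fderiv, norm_iteratedFDeriv_zero]
      have hb1 := hbd 1 le_rfl θ
      rw [← heq] at hb1
      rw [← NNReal.coe_le_coe, coe_nnnorm, Real.coe_toNNReal _ hCf1]
      exact hb1
    have hlip : LipschitzWith Cf1.toNNReal (fun θ => f θ s a) :=
      lipschitzWith_of_nnnorm_fderiv_le hdiff hfder
    have habs : ∀ (μ : Measure (Θ d)) (_ : IsProbabilityMeasure μ),
        |∫ θ, f θ s a ∂μ| ≤ Cf1 := by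
      intro μ hμ
      rw [← Real.norm_eq_abs]
      refine (norm_integral_le_of_norm_le (integrable_const Cf1)
        (Filter.Eventually.of_forall fun θ => by
          simpa [Real.norm_eq_abs] using hb0 θ)).trans ?_
      simp
    refine ⟨?_, habs ν inferInstance, habs ν' inferInstance⟩
    simpa using PolicyGradientMFAux.integral_diff_le_wasserstein ν ν' hν hν'
      (fun θ => f θ s a) (hφmeas a) hCf1 hlip
  -- the normalizing constants
  set Z : ℝ := ∫ a, Real.exp (g a) ∂μA with hZdef
  set Z' : ℝ := ∫ a, Real.exp (g' a) ∂μA with hZ'def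
  have hexp_m : AEStronglyMeasurable (fun a => Real.exp (g a)) μA :=
    (Real.continuous_exp.comp_stronglyMeasurable hgm).aestronglyMeasurable
  have hexp_m' : AEStronglyMeasurable (fun a => Real.exp (g' a)) μA :=
    (Real.continuous_exp.comp_stronglyMeasurable hgm').aestronglyMeasurable
  have hintZ : Integrable (fun a => Real.exp (g a)) μA := by
    refine (integrable_const (Real.exp Cf1)).mono' hexp_m ?_
    filter_upwards [hae] with a ha
    rw [Real.norm_eq_abs, abs_of_pos (Real.exp_pos _)]
    exact Real.exp_le_exp.mpr (le_trans (le_abs_self _) ha.2.1)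
  have hintZ' : Integrable (fun a => Real.exp (g' a)) μA := by
    refine (integrable_const (Real.exp Cf1)).mono' hexp_m' ?_
    filter_upwards [hae] with a ha
    rw [Real.norm_eq_abs, abs_of_pos (Real.exp_pos _)]
    exact Real.exp_le_exp.mpr (le_trans (le_abs_self _) ha.2.2)
  have hμuniv : 0 < (μA Set.univ).toReal :=
    ENNReal.toReal_pos (by simpa [Measure.measure_univ_eq_zero] using hμA)
      (measure_ne_top _ _)
  have hZpos : 0 < Z := by
    have hmono : ∫ (_ : A), Real.exp (-Cf1) ∂μA ≤ Z := by
      refine integral_mono_ae (integrable_const _) hintZ ?_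
      filter_upwards [hae] with a ha
      exact Real.exp_le_exp.mpr (neg_le_of_abs_le ha.2.1)
    rw [integral_const, smul_eq_mul] at hmono
    calc (0:ℝ) < (μA Set.univ).toReal * Real.exp (-Cf1) :=
          mul_pos hμuniv (Real.exp_pos _)
      _ ≤ Z := hmono
  have hZZ' : Z ≤ Real.exp δ * Z' := by
    have hptw : ∀ᵐ a ∂μA, Real.exp (g a) ≤ Real.exp δ * Real.exp (g' a) := by
      filter_upwards [hae] with a ha
      rw [← Real.exp_add]
      exact Real.exp_le_exp.mpr (by have := (abs_le.mp ha.1).1; linarith)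
    calc Z ≤ ∫ a, Real.exp δ * Real.exp (g' a) ∂μA :=
          integral_mono_ae hintZ (hintZ'.const_mul _) hptw
      _ = Real.exp δ * Z' := integral_const_mul _ _
  have hZ'Z : Z' ≤ Real.exp δ * Z := by
    have hptw : ∀ᵐ a ∂μA, Real.exp (g' a) ≤ Real.exp δ * Real.exp (g a) := by
      filter_upwards [hae] with a ha
      rw [← Real.exp_add]
      exact Real.exp_le_exp.mpr (by have := (abs_le.mp ha.1).2; linarith)
    calc Z' ≤ ∫ a, Real.exp δ * Real.exp (g a) ∂μA :=
          integral_mono_ae hintZ' (hintZ.const_mul _) hptw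
      _ = Real.exp δ * Z := integral_const_mul _ _
  have hZ'pos : 0 < Z' := by nlinarith [Real.exp_pos δ]
  -- softmax policies as densities
  have hpol : softmaxPolicy f μA ν s
      = μA.withDensity fun a => ENNReal.ofReal (Real.exp (g a) / Z) := rfl
  have hpol' : softmaxPolicy f μA ν' s
      = μA.withDensity fun a => ENNReal.ofReal (Real.exp (g' a) / Z') := rfl
  -- they are probability measures
  have huniv : ∀ (gg : A → ℝ), Integrable (fun a => Real.exp (gg a)) μA →
      ∀ ZZ : ℝ, ZZ = ∫ a, Real.exp (gg a) ∂μA → 0 < ZZ →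
      (μA.withDensity fun a => ENNReal.ofReal (Real.exp (gg a) / ZZ)) Set.univ = 1 := by
    intro gg hint ZZ hZZ hpos
    rw [withDensity_apply _ MeasurableSet.univ, Measure.restrict_univ,
      ← ofReal_integral_eq_lintegral_ofReal (hint.div_const ZZ)
        (Filter.Eventually.of_forall fun a => by positivity)]
    rw [integral_div, ← hZZ, div_self hpos.ne']
    simp
  haveI hPprob : IsProbabilityMeasure (softmaxPolicy f μA ν s) := by
    constructor
    rw [hpol]
    exact huniv g hintZ Z hZdef hZpos
  haveI hP'prob : IsProbabilityMeasure (softmaxPolicy f μA ν' s) := by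
    constructor
    rw [hpol']
    exact huniv g' hintZ' Z' hZ'def hZ'pos
  -- density comparison
  have comp : ∀ (g1 g2 : A → ℝ) (Z1 Z2 : ℝ), 0 < Z1 → 0 < Z2 → Z2 ≤ Real.exp δ * Z1 →
      (∀ᵐ a ∂μA, g1 a ≤ g2 a + δ) →
      ∀ E : Set A, MeasurableSet E →
      (μA.withDensity fun a => ENNReal.ofReal (Real.exp (g1 a) / Z1)) E
        ≤ ENNReal.ofReal (Real.exp (2*δ))
          * (μA.withDensity fun a => ENNReal.ofReal (Real.exp (g2 a) / Z2)) E := by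
    intro g1 g2 Z1 Z2 hZ1 hZ2 hZle hga E hE
    rw [withDensity_apply _ hE, withDensity_apply _ hE,
      ← lintegral_const_mul' _ _ ENNReal.ofReal_ne_top]
    refine lintegral_mono_ae ?_
    filter_upwards [ae_restrict_of_ae hga] with a ha
    rw [← ENNReal.ofReal_mul (Real.exp_nonneg _)]
    apply ENNReal.ofReal_le_ofReal
    have h1 : Real.exp (g1 a) ≤ Real.exp δ * Real.exp (g2 a) := by
      rw [← Real.exp_add]
      exact Real.exp_le_exp.mpr (by linarith)
    have h2δ : Real.exp (2*δ) = Real.exp δ * Real.exp δ := by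
      rw [← Real.exp_add]; ring_nf
    rw [← mul_div_assoc, div_le_div_iff₀ hZ1 hZ2]
    calc Real.exp (g1 a) * Z2 ≤ (Real.exp δ * Real.exp (g2 a)) * (Real.exp δ * Z1) :=
          mul_le_mul h1 hZle hZ2.le (by positivity)
      _ = Real.exp (2*δ) * Real.exp (g2 a) * Z1 := by rw [h2δ]; ring
  -- the one-sided TV bound
  have main : ∀ (P Q : Measure A), IsProbabilityMeasure P → IsProbabilityMeasure Q →
      (∀ E : Set A, MeasurableSet E → P E ≤ ENNReal.ofReal (Real.exp (2*δ)) * Q E) →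
      (∀ E : Set A, MeasurableSet E → Q E ≤ ENNReal.ofReal (Real.exp (2*δ)) * P E) →
      ∀ E : Set A, MeasurableSet E → (P E).toReal - (Q E).toReal ≤ δ := by
    intro P Q hP hQ h12 h21 E hE
    haveI := hP; haveI := hQ
    have hu'le : (P E).toReal ≤ 1 := by
      simpa using ENNReal.toReal_mono ENNReal.one_ne_top prob_le_one
    have hule : (Q E).toReal ≤ 1 := by
      simpa using ENNReal.toReal_mono ENNReal.one_ne_top prob_le_one
    have h1 : (P E).toReal ≤ Real.exp (2*δ) * (Q E).toReal := by
      have ht := ENNReal.toReal_mono (by finiteness) (h12 E hE)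
      rwa [ENNReal.toReal_mul, ENNReal.toReal_ofReal (Real.exp_nonneg _)] at ht
    have hcompl : (Q Eᶜ).toReal = 1 - (Q E).toReal := by
      rw [prob_compl_eq_one_sub hE,
        ENNReal.toReal_sub_of_le prob_le_one ENNReal.one_ne_top]
      simp
    have hcompl' : (P Eᶜ).toReal = 1 - (P E).toReal := by
      rw [prob_compl_eq_one_sub hE,
        ENNReal.toReal_sub_of_le prob_le_one ENNReal.one_ne_top]
      simp
    have h2 : 1 - (Q E).toReal ≤ Real.exp (2*δ) * (1 - (P E).toReal) := by
      have ht := ENNReal.toReal_mono (by finiteness) (h21 Eᶜ hE.compl)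
      rwa [ENNReal.toReal_mul, ENNReal.toReal_ofReal (Real.exp_nonneg _),
        hcompl, hcompl'] at ht
    have hinv : Real.exp (-(2*δ)) * Real.exp (2*δ) = 1 := by
      rw [← Real.exp_add]
      simp
    apply tanh_core hδ
    · nlinarith
    · nlinarith [mul_le_mul_of_nonneg_left h2 (Real.exp_pos (-(2*δ))).le,
        Real.exp_pos (-(2*δ))]
  have hg'g : ∀ᵐ a ∂μA, g' a ≤ g a + δ := by
    filter_upwards [hae] with a ha
    linarith [(abs_le.mp ha.1).2]
  have hgg' : ∀ᵐ a ∂μA, g a ≤ g' a + δ := by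
    filter_upwards [hae] with a ha
    linarith [(abs_le.mp ha.1).1]
  have hc12 : ∀ E : Set A, MeasurableSet E → softmaxPolicy f μA ν' s E
      ≤ ENNReal.ofReal (Real.exp (2*δ)) * softmaxPolicy f μA ν s E := by
    intro E hE
    rw [hpol, hpol']
    exact comp g' g Z' Z hZ'pos hZpos hZZ' hg'g E hE
  have hc21 : ∀ E : Set A, MeasurableSet E → softmaxPolicy f μA ν s E
      ≤ ENNReal.ofReal (Real.exp (2*δ)) * softmaxPolicy f μA ν' s E := by
    intro E hE
    rw [hpol, hpol']
    exact comp g g' Z Z' hZpos hZ'pos hZ'Z hgg' E hE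
  haveI hnesub : Nonempty {E : Set A // MeasurableSet E} := ⟨⟨∅, MeasurableSet.empty⟩⟩
  rw [tvDist]
  have hsup1 : (⨆ E : {E : Set A // MeasurableSet E},
      ((softmaxPolicy f μA ν' s E.1).toReal - (softmaxPolicy f μA ν s E.1).toReal)) ≤ δ :=
    ciSup_le fun E => main _ _ hP'prob hPprob hc12 hc21 E.1 E.2
  have hsup2 : (⨆ E : {E : Set A // MeasurableSet E},
      ((softmaxPolicy f μA ν s E.1).toReal - (softmaxPolicy f μA ν' s E.1).toReal)) ≤ δ :=
    ciSup_le fun E => main _ _ hPprob hP'prob hc21 hc12 E.1 E.2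
  calc _ ≤ δ + δ := add_le_add hsup1 hsup2
    _ = 2 * Cf1 * W := by rw [hδdef]; ring

end PolicyGradientMF
end
end
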